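/- Let 0 < α < 1 and z ≥ α. Let ρ₁, ρ₂, σ be n×n positive semidefinite complex matrices with ρ₁ ≤ ρ₂ in the Loewner order. Then Q_{α,z}(ρ₁‖σ) ≤ Q_{α,z}(ρ₂‖σ). -/

import Mathlib

/-!
Write `p = α / z ∈ (0, 1]` and `s = (1 - α) / (2z)`. By the Löwner–Heinz theorem `x ↦ x ^ p` is
operator monotone, so `ρ₁ ^ p ≤ ρ₂ ^ p`, and conjugating by the self-adjoint `σ ^ s` preserves the
Loewner order. It remains to see that `X ↦ Tr X ^ z` is monotone on positive semidefinite
matrices. This follows from Weyl's monotonicity principle: if `X ≤ Y`, then the `k`-th largest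
eigenvalue of `X` is at most that of `Y`. That in turn is a Courant–Fischer dimension count: the
top `k + 1` eigenvectors of `X` and the bottom `n - k` eigenvectors of `Y` span subspaces with a
nonzero common vector.
-/

open Matrix
open scoped ComplexOrder

/-- Real power of a positive semidefinite matrix via the spectral decomposition,
applying `x ^ t` (real `rpow`, so with the convention `0 ^ t = 0` for `t ≠ 0`)
to the eigenvalues; returns `0` if the matrix is not Hermitian. -/
noncomputable def mpow {n : Type*} [Fintype n] [DecidableEq n]
    (A : Matrix n n ℂ) (t : ℝ) : Matrix n n ℂ :=
  if hA : A.IsHermitian then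
    (hA.eigenvectorUnitary : Matrix n n ℂ) *
      Matrix.diagonal (fun i => ((hA.eigenvalues i ^ t : ℝ) : ℂ)) *
      star (hA.eigenvectorUnitary : Matrix n n ℂ)
  else 0


/-- The α-z-Rényi quantity `Q_{α,z}(ρ‖σ) = Tr((σ^((1−α)/2z) ρ^(α/z) σ^((1−α)/2z))^z)`. -/
noncomputable def Qaz {n : Type*} [Fintype n] [DecidableEq n]
    (α z : ℝ) (ρ σ : Matrix n n ℂ) : ℝ :=
  ((mpow (mpow σ ((1 - α) / (2 * z)) * mpow ρ (α / z) * mpow σ ((1 - α) / (2 * z))) z).trace).re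

open Module Submodule RCLike
open scoped InnerProductSpace

namespace OrthonormalBasis

variable {ι 𝕜 E : Type*} [RCLike 𝕜] [NormedAddCommGroup E] [InnerProductSpace 𝕜 E]
  [Fintype ι] (b : OrthonormalBasis ι 𝕜 E)

lemma inner_eq_zero_of_mem_span_image {s : Set ι} {x : E} (hx : x ∈ span 𝕜 (b '' s)) {i : ι}
    (hi : i ∉ s) : ⟪b i, x⟫_𝕜 = 0 := by
  have hle : span 𝕜 (b '' s) ≤ (𝕜 ∙ b i)ᗮ := by
    refine span_le.mpr ?_
    rintro _ ⟨j, hj, rfl⟩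
    exact mem_orthogonal_singleton_iff_inner_right.mpr
      (b.orthonormal.2 fun hij => hi (hij ▸ hj))
  exact mem_orthogonal_singleton_iff_inner_right.mp (hle hx)

lemma finrank_span_image (s : Finset ι) : finrank 𝕜 (span 𝕜 (b '' s)) = s.card := by
  rw [Set.image_eq_range]
  exact (finrank_span_eq_card (b.orthonormal.linearIndependent.comp _ Subtype.val_injective)).trans
    (by simp)

end OrthonormalBasis

namespace LinearMap.IsSymmetric

variable {𝕜 E : Type*} [RCLike 𝕜] [NormedAddCommGroup E] [InnerProductSpace 𝕜 E]
  [FiniteDimensional 𝕜 E] {T S : E →ₗ[𝕜] E} {n : ℕ} (hT : T.IsSymmetric) (hn : finrank 𝕜 E = n)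

lemma re_inner_apply_self_eq_sum (x : E) :
    re ⟪x, T x⟫_𝕜 = ∑ i, hT.eigenvalues hn i * ‖⟪hT.eigenvectorBasis hn i, x⟫_𝕜‖ ^ 2 := by
  rw [← (hT.eigenvectorBasis hn).sum_inner_mul_inner x (T x), map_sum]
  congr with i
  rw [← OrthonormalBasis.repr_apply_apply, eigenvectorBasis_apply_self_apply,
    OrthonormalBasis.repr_apply_apply, ← inner_conj_symm x, mul_left_comm, RCLike.conj_mul]
  norm_cast

lemma le_re_inner_of_mem_span {s : Set (Fin n)} {c : ℝ} (hc : ∀ i ∈ s, c ≤ hT.eigenvalues hn i)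
    {x : E} (hx : x ∈ span 𝕜 (hT.eigenvectorBasis hn '' s)) : c * ‖x‖ ^ 2 ≤ re ⟪x, T x⟫_𝕜 := by
  rw [hT.re_inner_apply_self_eq_sum hn, ← (hT.eigenvectorBasis hn).sum_sq_norm_inner_right x,
    Finset.mul_sum]
  refine Finset.sum_le_sum fun i _ => ?_
  by_cases hi : i ∈ s
  · exact mul_le_mul_of_nonneg_right (hc i hi) (by positivity)
  · simp [OrthonormalBasis.inner_eq_zero_of_mem_span_image _ hx hi]

lemma re_inner_le_of_mem_span {s : Set (Fin n)} {c : ℝ} (hc : ∀ i ∈ s, hT.eigenvalues hn i ≤ c)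
    {x : E} (hx : x ∈ span 𝕜 (hT.eigenvectorBasis hn '' s)) : re ⟪x, T x⟫_𝕜 ≤ c * ‖x‖ ^ 2 := by
  rw [hT.re_inner_apply_self_eq_sum hn, ← (hT.eigenvectorBasis hn).sum_sq_norm_inner_right x,
    Finset.mul_sum]
  refine Finset.sum_le_sum fun i _ => ?_
  by_cases hi : i ∈ s
  · exact mul_le_mul_of_nonneg_right (hc i hi) (by positivity)
  · simp [OrthonormalBasis.inner_eq_zero_of_mem_span_image _ hx hi]

theorem eigenvalues_le_of_le (hS : S.IsSymmetric) (h : T ≤ S) (k : Fin n) :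
    hT.eigenvalues hn k ≤ hS.eigenvalues hn k := by
  set U := span 𝕜 (hT.eigenvectorBasis hn '' ↑(Finset.Iic k))
  set V := span 𝕜 (hS.eigenvectorBasis hn '' ↑(Finset.Ici k))
  obtain ⟨x, ⟨hxU, hxV⟩, hx⟩ : ∃ x ∈ U ⊓ V, x ≠ 0 := by
    refine exists_mem_ne_zero_of_ne_bot fun hUV => ?_
    have hsum := finrank_sup_add_finrank_inf_eq U V
    have hsup := finrank_le (U ⊔ V)
    rw [hUV, finrank_bot, OrthonormalBasis.finrank_span_image,
      OrthonormalBasis.finrank_span_image, Fin.card_Iic, Fin.card_Ici] at hsum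
    omega
  have hlow := hT.le_re_inner_of_mem_span hn
    (fun i hi => hT.eigenvalues_antitone hn (Finset.mem_Iic.mp hi)) hxU
  have hup := hS.re_inner_le_of_mem_span hn
    (fun i hi => hS.eigenvalues_antitone hn (Finset.mem_Ici.mp hi)) hxV
  have hmid : re ⟪x, T x⟫_𝕜 ≤ re ⟪x, S x⟫_𝕜 := by
    simpa [inner_sub_right] using h.re_inner_nonneg_right x
  exact le_of_mul_le_mul_right (hlow.trans (hmid.trans hup)) (by positivity)

end LinearMap.IsSymmetric

namespace Matrix

open scoped MatrixOrder

variable {n 𝕜 : Type*} [Fintype n] [DecidableEq n] [RCLike 𝕜] {A B : Matrix n n 𝕜}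

lemma toEuclideanLin_le_toEuclideanLin (h : A ≤ B) : A.toEuclideanLin ≤ B.toEuclideanLin := by
  rwa [LinearMap.le_def, ← map_sub, isPositive_toEuclideanLin_iff]

lemma IsHermitian.eigenvalues₀_le_of_le (hA : A.IsHermitian) (hB : B.IsHermitian) (h : A ≤ B)
    (k : Fin (Fintype.card n)) : hA.eigenvalues₀ k ≤ hB.eigenvalues₀ k :=
  LinearMap.IsSymmetric.eigenvalues_le_of_le _ _ _ (toEuclideanLin_le_toEuclideanLin h) k

lemma IsHermitian.sum_eigenvalues_eq_sum_eigenvalues₀ (hA : A.IsHermitian) (f : ℝ → ℝ) :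
    ∑ i, f (hA.eigenvalues i) = ∑ k, f (hA.eigenvalues₀ k) :=
  Equiv.sum_comp (Fintype.equivOfCardEq (Fintype.card_fin _)).symm (f ∘ hA.eigenvalues₀)

lemma PosSemidef.eigenvalues₀_nonneg (hA : A.PosSemidef) (k : Fin (Fintype.card n)) :
    0 ≤ hA.1.eigenvalues₀ k :=
  eigenvalue_nonneg_of_nonneg (LinearMap.IsSymmetric.hasEigenvalue_eigenvalues _ _ k)
    (isPositive_toEuclideanLin_iff.mpr hA).re_inner_nonneg_right

lemma PosSemidef.sum_eigenvalues_le_of_le (hA : A.PosSemidef) (hB : B.PosSemidef) (h : A ≤ B)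
    {f : ℝ → ℝ} (hf : MonotoneOn f (Set.Ici 0)) :
    ∑ i, f (hA.1.eigenvalues i) ≤ ∑ i, f (hB.1.eigenvalues i) := by
  rw [hA.1.sum_eigenvalues_eq_sum_eigenvalues₀, hB.1.sum_eigenvalues_eq_sum_eigenvalues₀]
  exact Finset.sum_le_sum fun k _ => hf (hA.eigenvalues₀_nonneg k) (hB.eigenvalues₀_nonneg k)
    (hA.1.eigenvalues₀_le_of_le hB.1 h k)

lemma IsHermitian.trace_cfc (hA : A.IsHermitian) (f : ℝ → ℝ) :
    (cfc f A).trace = ∑ i, (f (hA.eigenvalues i) : 𝕜) := by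
  rw [hA.cfc_eq, IsHermitian.cfc, Unitary.conjStarAlgAut_apply, trace_mul_cycle,
    Unitary.coe_star_mul_self, one_mul, trace_diagonal]
  rfl

end Matrix

open scoped MatrixOrder Matrix.Norms.L2Operator

section mpow

variable {n : Type*} [Fintype n] [DecidableEq n] {A B : Matrix n n ℂ}

lemma mpow_eq_cfc (hA : A.IsHermitian) (t : ℝ) : mpow A t = cfc (· ^ t : ℝ → ℝ) A := by
  rw [mpow, dif_pos hA, hA.cfc_eq]
  rfl

lemma mpow_eq_rpow (hA : A.PosSemidef) (t : ℝ) : mpow A t = A ^ t := by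
  rw [mpow_eq_cfc hA.1, CFC.rpow_eq_cfc_real hA.nonneg]

lemma isSelfAdjoint_mpow (A : Matrix n n ℂ) (t : ℝ) : IsSelfAdjoint (mpow A t) := by
  by_cases hA : A.IsHermitian
  · rw [mpow_eq_cfc hA]
    exact cfc_predicate _ _
  · rw [mpow, dif_neg hA]
    exact .zero _

lemma re_trace_mpow_le_of_le (hA : A.PosSemidef) (h : A ≤ B) {t : ℝ} (ht : 0 ≤ t) :
    (mpow A t).trace.re ≤ (mpow B t).trace.re := by
  have hB : B.PosSemidef := Matrix.nonneg_iff_posSemidef.mp (hA.nonneg.trans h)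
  rw [mpow_eq_cfc hA.1, mpow_eq_cfc hB.1, hA.1.trace_cfc, hB.1.trace_cfc]
  simp only [Complex.re_sum]
  exact hA.sum_eigenvalues_le_of_le hB h fun x hx y _ hxy => Real.rpow_le_rpow hx hxy ht

end mpow

theorem Qaz_mono_left_general (n : ℕ) (α z : ℝ) (hα0 : 0 < α) (hz : α ≤ z)
    (ρ₁ ρ₂ σ : Matrix (Fin n) (Fin n) ℂ)
    (hρ₁ : ρ₁.PosSemidef) (hρ₂ : ρ₂.PosSemidef)
    (hle : (ρ₂ - ρ₁).PosSemidef) :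
    Qaz α z ρ₁ σ ≤ Qaz α z ρ₂ σ := by
  have hz0 : 0 < z := hα0.trans_le hz
  set S := mpow σ ((1 - α) / (2 * z))
  have hS : IsSelfAdjoint S := isSelfAdjoint_mpow σ _
  have hpow : mpow ρ₁ (α / z) ≤ mpow ρ₂ (α / z) := by
    rw [mpow_eq_rpow hρ₁, mpow_eq_rpow hρ₂]
    exact CFC.rpow_le_rpow ⟨(div_pos hα0 hz0).le, (div_le_one hz0).mpr hz⟩ (Matrix.le_iff.mpr hle)
  have hX₁ : 0 ≤ S * mpow ρ₁ (α / z) * S :=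
    hS.conjugate_nonneg (mpow_eq_rpow hρ₁ _ ▸ CFC.rpow_nonneg)
  exact re_trace_mpow_le_of_le (Matrix.nonneg_iff_posSemidef.mp hX₁)
    (hS.conjugate_le_conjugate hpow) hz0.le

/-- For `0 < α < 1` and `z ≥ α`, `Q_{α,z}(·‖σ)` is monotone in the first argument
with respect to the Loewner order. -/
theorem Qaz_mono_left (n : ℕ) (α z : ℝ) (hα0 : 0 < α) (hα1 : α < 1) (hz : α ≤ z)
    (ρ₁ ρ₂ σ : Matrix (Fin n) (Fin n) ℂ)
    (hρ₁ : ρ₁.PosSemidef) (hρ₂ : ρ₂.PosSemidef) (hσ : σ.PosSemidef)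
    (hle : (ρ₂ - ρ₁).PosSemidef) :
    Qaz α z ρ₁ σ ≤ Qaz α z ρ₂ σ :=
  Qaz_mono_left_general n α z hα0 hz ρ₁ ρ₂ σ hρ₁ hρ₂ hle
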